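/- Let T(1),…,T(B') be fixed threshold families of size kmax (a finite template), let α ∈ (0,1), and let π^0_1,…,π^0_B be i.i.d. copies of a random vector π^0 in ℝ^p. For each b', let JER^0(T(b')) = ℙ(∃ k : π^0_{(k)} < T(b')_k) and let the empirical JER of T(b') be (1/B) Σ_{b=1}^B 1{∃ k : π^0_{b,(k)} < T(b')_k}. Define the calibrated family t̂ = T(λ) where λ is the largest b' ∈ {1,…,B'} whose empirical JER is at most α, on the event that such b' exists. Then for every M > 0, ℙ(λ exists and JER^0(t̂) > α + M/√B) ≤ B'/(4M²). -/

import Mathlib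

open MeasureTheory ProbabilityTheory

/-- The `k`-th smallest value (1-indexed) of `v` over the finite index set `A`. -/
noncomputable def orderStat {ι : Type*} (A : Finset ι) (v : ι → ℝ) (k : ℕ) : ℝ :=
  (Multiset.sort (A.val.map v) (· ≤ ·)).getD (k - 1) 0

/-- The JER violation event for a vector `v ∈ ℝ^p` and a threshold family `t` of size `kmax`. -/
def jerEvent (p kmax : ℕ) (t : ℕ → ℝ) (v : Fin p → ℝ) : Prop :=
  ∃ k, 1 ≤ k ∧ k ≤ kmax ∧ orderStat Finset.univ v k < t k


lemma sorted_getElem_lt_iff {l : List ℝ} (hl : l.Pairwise (· ≤ ·)) {j : ℕ} (hj : j < l.length)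
    (c : ℝ) : l[j] < c ↔ j + 1 ≤ l.countP (fun x => decide (x < c)) := by
  have hpw : ∀ i1 i2 (h1 : i1 < l.length) (h2 : i2 < l.length), i1 ≤ i2 → l[i1] ≤ l[i2] := by
    intro i1 i2 h1 h2 h
    rcases eq_or_lt_of_le h with rfl | h
    · exact le_refl _
    · exact List.pairwise_iff_getElem.mp hl i1 i2 h1 h2 h
  constructor
  · intro hlt
    have hsplit : l.countP (fun x => decide (x < c)) =
        (l.take (j+1)).countP (fun x => decide (x < c)) +
        (l.drop (j+1)).countP (fun x => decide (x < c)) := by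
      rw [← List.countP_append, List.take_append_drop]
    have hlen : (l.take (j+1)).length = j+1 := by
      rw [List.length_take]; omega
    have htake : (l.take (j+1)).countP (fun x => decide (x < c)) = (l.take (j+1)).length := by
      rw [List.countP_eq_length]
      intro a ha
      obtain ⟨i, hi, rfl⟩ := List.mem_iff_getElem.mp ha
      have hi' : i < l.length := by rw [hlen] at hi; omega
      rw [List.getElem_take]
      simp only [decide_eq_true_eq]
      exact lt_of_le_of_lt (hpw i j hi' hj (by rw [hlen] at hi; omega)) hlt
    omega
  · intro hcount
    by_contra hge
    push_neg at hge
    have hdrop : (l.drop j).countP (fun x => decide (x < c)) = 0 := by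
      rw [List.countP_eq_zero]
      intro a ha
      obtain ⟨i, hi, rfl⟩ := List.mem_iff_getElem.mp ha
      have hlen2 : (l.drop j).length = l.length - j := List.length_drop
      have hi' : j + i < l.length := by omega
      rw [List.getElem_drop]
      simp only [decide_eq_true_eq, not_lt]
      exact le_trans hge (hpw j (j+i) hj hi' (by omega))
    have hsplit : l.countP (fun x => decide (x < c)) =
        (l.take j).countP (fun x => decide (x < c)) +
        (l.drop j).countP (fun x => decide (x < c)) := by
      rw [← List.countP_append, List.take_append_drop]
    have htake : (l.take j).countP (fun x => decide (x < c)) ≤ j := by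
      calc (l.take j).countP (fun x => decide (x < c)) ≤ (l.take j).length :=
        List.countP_le_length
      _ ≤ j := by rw [List.length_take]; omega
    omega

open Classical in
lemma orderStat_lt_iff {ι : Type*} (A : Finset ι) (v : ι → ℝ) {k : ℕ}
    (hk1 : 1 ≤ k) (hk2 : k ≤ A.card) (c : ℝ) :
    orderStat A v k < c ↔ k ≤ (A.filter (fun i => v i < c)).card := by
  classical
  set l := Multiset.sort (A.val.map v) (· ≤ ·) with hldef
  have hsorted : l.Pairwise (· ≤ ·) := Multiset.pairwise_sort _ _
  have hlen : l.length = A.card := by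
    rw [hldef, Multiset.length_sort, Multiset.card_map]; rfl
  have hklt : k - 1 < l.length := by omega
  have hgetD : orderStat A v k = l[k-1] := by
    rw [orderStat, ← hldef, List.getD_eq_getElem l 0 hklt]
  have hcount : l.countP (fun x => decide (x < c)) = (A.filter (fun i => v i < c)).card := by
    have h1 : (l : Multiset ℝ) = A.val.map v := Multiset.sort_eq _ _
    have h2 : Multiset.countP (fun x => x < c) (l : Multiset ℝ) =
        l.countP (fun x => decide (x < c)) := Multiset.coe_countP _ _
    rw [← h2, h1, Multiset.countP_map, Finset.card_def, Finset.filter_val]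

  rw [hgetD, sorted_getElem_lt_iff hsorted hklt, hcount]
  omega

lemma orderStat_of_card_lt {ι : Type*} (A : Finset ι) (v : ι → ℝ) {k : ℕ}
    (hk : A.card < k) : orderStat A v k = 0 := by
  apply List.getD_eq_default
  rw [Multiset.length_sort, Multiset.card_map]
  have : Multiset.card A.val = A.card := rfl
  omega


open Classical in
lemma measurable_card_filter (p : ℕ) (c : ℝ) :
    Measurable fun v : Fin p → ℝ => ((Finset.univ.filter fun i => v i < c).card : ℕ) := by
  simp_rw [Finset.card_filter]
  apply Finset.measurable_sum
  intro i _
  exact Measurable.ite (measurableSet_lt (measurable_pi_apply i) measurable_const)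
    measurable_const measurable_const

open Classical in
lemma measurableSet_jerEvent (p kmax : ℕ) (t : ℕ → ℝ) :
    MeasurableSet {v : Fin p → ℝ | jerEvent p kmax t v} := by
  have : {v : Fin p → ℝ | jerEvent p kmax t v} =
      ⋃ k ∈ Set.Icc 1 kmax, {v : Fin p → ℝ | orderStat Finset.univ v k < t k} := by
    ext v; simp [jerEvent, Set.mem_Icc, and_assoc]
  rw [this]
  apply MeasurableSet.biUnion (Set.to_countable _)
  intro k hk
  rcases le_or_gt k p with hkp | hkp
  · have hcard : k ≤ (Finset.univ : Finset (Fin p)).card := by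
      simpa [Finset.card_univ] using hkp
    have hset : {v : Fin p → ℝ | orderStat Finset.univ v k < t k} =
        (fun v : Fin p → ℝ => ((Finset.univ.filter fun i => v i < t k).card : ℕ)) ⁻¹'
          Set.Ici k := by
      ext v
      simp only [Set.mem_setOf_eq, Set.mem_preimage, Set.mem_Ici]
      exact orderStat_lt_iff _ _ hk.1 hcard _
    rw [hset]
    exact measurable_card_filter p (t k) measurableSet_Ici
  · have : ∀ v : Fin p → ℝ, orderStat Finset.univ v k = 0 := fun v =>
      orderStat_of_card_lt _ _ (by simpa [Finset.card_univ] using hkp)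
    by_cases h : (0:ℝ) < t k
    · simp [this, h]
    · simp [this, h]

open Classical in
/-- Indicator of the JER violation event. -/
noncomputable def jerInd (p kmax : ℕ) (t : ℕ → ℝ) (v : Fin p → ℝ) : ℝ :=
  if jerEvent p kmax t v then 1 else 0

/-- Finite-sample form of Theorem 2 (JER control via calibration). Let `T(1),…,T(B')` be a
finite template of threshold families of size `kmax`, `α ∈ (0,1)`, and `π⁰_1,…,π⁰_B` i.i.d.
copies of a random vector `π⁰` in `ℝ^p`. Let `λ` be the largest `b'` whose empirical JER
is at most `α` (when it exists), and `t̂ = T(λ)`. Then for every `M > 0`,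
`ℙ(λ exists and JER⁰(t̂) > α + M/√B) ≤ B'/(4M²)`. -/
theorem calibrated_jer_control
    {Ω : Type*} [MeasurableSpace Ω] (μ : Measure Ω) [IsProbabilityMeasure μ]
    (p : ℕ) (hp : 1 ≤ p) (B : ℕ) (hB : 1 ≤ B) (B' : ℕ) (hB' : 1 ≤ B')
    (kmax : ℕ) (hkmax : 1 ≤ kmax)
    -- the template: `B'` threshold families, component-wise non-decreasing in `b'`
    (T : Fin B' → ℕ → ℝ)
    (hT0 : ∀ b', 0 ≤ T b' 1)
    (hTmono : ∀ b', ∀ j k, 1 ≤ j → j ≤ k → k ≤ kmax → T b' j ≤ T b' k)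
    (hT1 : ∀ b', T b' kmax ≤ 1)
    (hTtemplate : ∀ b' c : Fin B', b' ≤ c → ∀ k, 1 ≤ k → k ≤ kmax → T b' k ≤ T c k)
    -- i.i.d. draws of `π⁰`
    (π0 : Fin B → Ω → Fin p → ℝ) (πref : Ω → Fin p → ℝ)
    (hmeas : ∀ b, Measurable (π0 b)) (hrefmeas : Measurable πref)
    (hindep : iIndepFun π0 μ)
    (hident : ∀ b, IdentDistrib (π0 b) πref μ μ)
    (α : ℝ) (hα0 : 0 < α) (hα1 : α < 1) :
    ∀ M : ℝ, 0 < M →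
      μ {ω | ∃ lam : Fin B',
          -- the empirical JER of `T(lam)` is at most `α`,
          (1 / B : ℝ) * (∑ b : Fin B, jerInd p kmax (T lam) (π0 b ω)) ≤ α ∧
          -- `lam` is the largest such index,
          (∀ c : Fin B',
            (1 / B : ℝ) * (∑ b : Fin B, jerInd p kmax (T c) (π0 b ω)) ≤ α → c ≤ lam) ∧
          -- and the true JER of the calibrated family `t̂ = T(lam)` exceeds `α + M/√B`
          α + M / Real.sqrt B < (μ {ω' | jerEvent p kmax (T lam) (πref ω')}).toReal}
        ≤ ENNReal.ofReal (B' / (4 * M ^ 2)) := by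
  intro M hM
  classical
  have hBpos : (0:ℝ) < B := by exact_mod_cast hB
  have hsqpos : 0 < Real.sqrt B := Real.sqrt_pos.mpr hBpos
  set c : ℝ := M * Real.sqrt B with hcdef
  have hcpos : 0 < c := mul_pos hM hsqpos
  have hc2 : c ^ 2 = M ^ 2 * B := by
    rw [hcdef, mul_pow, Real.sq_sqrt hBpos.le]
  have hfmeas : ∀ b' : Fin B', Measurable (jerInd p kmax (T b')) := by
    intro b'
    unfold jerInd
    exact Measurable.ite (measurableSet_jerEvent p kmax (T b')) measurable_const
      measurable_const
  have hbound : ∀ (t : ℕ → ℝ) (v : Fin p → ℝ), ‖jerInd p kmax t v‖ ≤ 1 := by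
    intro t v; unfold jerInd; split <;> simp
  set X : Fin B' → Fin B → Ω → ℝ := fun b' b ω => jerInd p kmax (T b') (π0 b ω) with hX
  have hXmeas : ∀ b' b, Measurable (X b' b) := fun b' b => (hfmeas b').comp (hmeas b)
  have hX2 : ∀ b' b, MemLp (X b' b) 2 μ := fun b' b =>
    MemLp.of_bound (hXmeas b' b).aestronglyMeasurable 1
      (Filter.Eventually.of_forall fun ω => hbound _ _)
  set q : Fin B' → ℝ := fun b' => (μ {ω' | jerEvent p kmax (T b') (πref ω')}).toReal with hq
  have hmean : ∀ b' b, μ[X b' b] = q b' := by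
    intro b' b
    have h1 : μ[X b' b] = ∫ ω, jerInd p kmax (T b') (πref ω) ∂μ :=
      ((hident b).comp (hfmeas b')).integral_eq
    have h2 : (fun ω => jerInd p kmax (T b') (πref ω)) =
        Set.indicator (πref ⁻¹' {v | jerEvent p kmax (T b') v}) (fun _ => (1:ℝ)) := by
      funext ω
      simp only [Set.indicator_apply, Set.mem_preimage, Set.mem_setOf_eq, jerInd]
    rw [h1, h2, integral_indicator_const _
      (hrefmeas (measurableSet_jerEvent p kmax (T b')))]
    simp [hq, measureReal_def]
  have hsqX : ∀ b' b, (X b' b) ^ 2 = X b' b := by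
    intro b' b; funext ω
    simp only [Pi.pow_apply, hX, jerInd]
    split <;> norm_num
  have hvar1 : ∀ b' b, variance (X b' b) μ ≤ 1/4 := by
    intro b' b
    rw [variance_eq_sub (hX2 b' b), hsqX b' b]
    nlinarith [sq_nonneg (μ[X b' b] - 1/2)]
  set Sm : Fin B' → Ω → ℝ := fun b' => ∑ b : Fin B, X b' b with hSm
  have hSm2 : ∀ b', MemLp (Sm b') 2 μ := fun b' =>
    memLp_finsetSum' _ (fun b _ => hX2 b' b)
  have hvarSm : ∀ b', variance (Sm b') μ ≤ B/4 := by
    intro b'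
    have hpair : Set.Pairwise ↑(Finset.univ : Finset (Fin B))
        (fun i j => ProbabilityTheory.IndepFun (X b' i) (X b' j) μ) := by
      intro i _ j _ hij
      exact (hindep.indepFun hij).comp (hfmeas b') (hfmeas b')
    have := ProbabilityTheory.IndepFun.variance_sum (fun b (_ : b ∈ Finset.univ) => hX2 b' b) hpair
    rw [hSm, this]
    calc ∑ b : Fin B, variance (X b' b) μ ≤ ∑ _b : Fin B, (1/4 : ℝ) :=
          Finset.sum_le_sum (fun b _ => hvar1 b' b)
      _ = B/4 := by simp [Finset.sum_const, Finset.card_univ]; ring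
  have hmeanSm : ∀ b', μ[Sm b'] = B * q b' := by
    intro b'
    have h1 : μ[Sm b'] = ∑ b : Fin B, μ[X b' b] := by
      rw [hSm]
      simp only [Finset.sum_apply]
      exact integral_finset_sum _ (fun b _ => (hX2 b' b).integrable one_le_two)
    rw [h1]
    simp [hmean, Finset.sum_const, Finset.card_univ, nsmul_eq_mul]
  have hcheb : ∀ b', μ {ω | c ≤ |Sm b' ω - μ[Sm b']|} ≤ ENNReal.ofReal (1/(4*M^2)) := by
    intro b'
    calc μ {ω | c ≤ |Sm b' ω - μ[Sm b']|}
        ≤ ENNReal.ofReal (variance (Sm b') μ / c^2) :=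
          ProbabilityTheory.meas_ge_le_variance_div_sq (hSm2 b') hcpos
      _ ≤ ENNReal.ofReal (1/(4*M^2)) := by
          apply ENNReal.ofReal_le_ofReal
          rw [hc2]
          have h1 : variance (Sm b') μ / (M^2 * B) ≤ (B/4) / (M^2 * B) := by
            rw [div_le_div_iff₀ (by positivity) (by positivity)]
            exact mul_le_mul_of_nonneg_right (hvarSm b') (by positivity)
          calc variance (Sm b') μ / (M^2 * B) ≤ (B/4) / (M^2 * B) := h1
            _ = 1/(4*M^2) := by field_simp
  have hsub : {ω | ∃ lam : Fin B',
        (1 / B : ℝ) * (∑ b : Fin B, jerInd p kmax (T lam) (π0 b ω)) ≤ α ∧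
        (∀ c : Fin B',
          (1 / B : ℝ) * (∑ b : Fin B, jerInd p kmax (T c) (π0 b ω)) ≤ α → c ≤ lam) ∧
        α + M / Real.sqrt B < q lam} ⊆
      ⋃ b' : Fin B', {ω | c ≤ |Sm b' ω - μ[Sm b']|} := by
    rintro ω ⟨lam, h1, -, h3⟩
    refine Set.mem_iUnion.mpr ⟨lam, ?_⟩
    simp only [Set.mem_setOf_eq]
    rw [hmeanSm lam]
    have hsum : Sm lam ω = ∑ b : Fin B, jerInd p kmax (T lam) (π0 b ω) := by
      simp [hSm, hX, Finset.sum_apply]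
    have h1' : Sm lam ω ≤ B * α := by
      rw [hsum]
      have := h1
      rw [div_mul_eq_mul_div, one_mul, div_le_iff₀ hBpos] at this
      linarith [this]
    have hBdiv : (B:ℝ) * (M / Real.sqrt B) = c := by
      rw [hcdef, mul_comm, div_mul_eq_mul_div, mul_div_assoc, Real.div_sqrt]
    have h3' : c ≤ B * q lam - Sm lam ω := by nlinarith [h3, h1', hBdiv]
    calc c ≤ B * q lam - Sm lam ω := h3'
      _ ≤ |Sm lam ω - B * q lam| := by rw [abs_sub_comm]; exact le_abs_self _
  calc μ _ ≤ μ (⋃ b' : Fin B', {ω | c ≤ |Sm b' ω - μ[Sm b']|}) := measure_mono hsub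
    _ ≤ ∑' b' : Fin B', μ {ω | c ≤ |Sm b' ω - μ[Sm b']|} := measure_iUnion_le _
    _ ≤ ∑' _b' : Fin B', ENNReal.ofReal (1/(4*M^2)) := ENNReal.tsum_le_tsum (fun b' => hcheb b')
    _ = B' * ENNReal.ofReal (1/(4*M^2)) := by
        rw [tsum_fintype]
        simp [Finset.sum_const, Finset.card_univ, nsmul_eq_mul]
    _ = ENNReal.ofReal (B'/(4*M^2)) := by
        rw [← ENNReal.ofReal_natCast B', ← ENNReal.ofReal_mul (by positivity)]
        congr 1
        ring
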